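/- Let q ≥ 2 and 0 < ρ < 1. Then the function x ↦ R_q(ρ,x,1/x) is strictly increasing on (0,∞): for all 0 < x₁ < x₂ it holds that R_q(ρ,x₁,1/x₁) < R_q(ρ,x₂,1/x₂). -/

import Mathlib

/-- `N_q(ρ,x,y) := (y/(y+1))(1+ρx)^q + (1/(y+1))(1−ρyx)^q` (real powers). -/
noncomputable def Nq (q ρ x y : ℝ) : ℝ :=
  (y / (y + 1)) * (1 + ρ * x) ^ q + (1 / (y + 1)) * (1 - ρ * y * x) ^ q

/-- `R_q(ρ,x,y) := ln N_q(ρ,x,y) / ln N_q(1,x,y)`. -/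
noncomputable def Rq (q ρ x y : ℝ) : ℝ :=
  Real.log (Nq q ρ x y) / Real.log (Nq q 1 x y)

/-!
Put `exp u = 1 + x`. Then `(q - 1) * Rq q ρ x (1 / x) = F u / u - 1`, where
`F u = log ((1 - ρ + ρ eᵘ) ^ q + (1 - ρ) ^ q (eᵘ - 1))` satisfies `F 0 = 0`; so it suffices that
`F` is strictly convex, for then its secant slope from `0` increases with `u`.
Write the argument of the logarithm as `A + B` with `B = (1 - ρ) ^ q eᵘ`, so that `B' = B'' = B`.
Then `(A + B)'' (A + B) - (A + B)' ^ 2 = (A'' A - A' ^ 2) + B (A'' + A - 2 A')`; the first term is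
positive by Bernoulli's inequality and the second is nonnegative by a second-order Taylor bound
for `s ↦ (1 - ρ + s) ^ q`, which is where `q ≥ 2` enters.
-/

open Real Set

lemma strictConvexOn_univ_log_of_hasDerivAt {f f' f'' : ℝ → ℝ}
    (hf : ∀ x, HasDerivAt f (f' x) x) (hf' : ∀ x, HasDerivAt f' (f'' x) x)
    (hpos : ∀ x, 0 < f x) (h : ∀ x, f' x ^ 2 < f'' x * f x) :
    StrictConvexOn ℝ univ fun x ↦ log (f x) := by
  have hlog : ∀ x, HasDerivAt (fun x ↦ log (f x)) (f' x / f x) x :=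
    fun x ↦ (hf x).log (hpos x).ne'
  refine StrictMono.strictConvexOn_univ_of_deriv
    (continuous_iff_continuousAt.2 fun x ↦ (hlog x).continuousAt) ?_
  rw [funext fun x ↦ (hlog x).deriv]
  refine strictMono_of_hasDerivAt_pos (fun x ↦ (hf' x).div (hf x) (hpos x).ne') fun x ↦ ?_
  exact div_pos (by nlinarith [h x]) (pow_pos (hpos x) 2)

lemma rpow_mul_add_mul_lt_mul_add_rpow {q d t : ℝ} (hq : 1 < q) (hd : 0 < d) (ht : 0 < t) :
    d ^ q * (d + q * t) < d * (d + t) ^ q := by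
  have h := one_add_mul_self_lt_rpow_one_add (by linarith [div_pos ht hd]) (div_pos ht hd).ne' hq
  rw [show 1 + t / d = (d + t) / d by field_simp, div_rpow (by positivity) hd.le,
    lt_div_iff₀ (by positivity)] at h
  calc d ^ q * (d + q * t) = d * ((1 + q * (t / d)) * d ^ q) := by field_simp
    _ < d * (d + t) ^ q := mul_lt_mul_of_pos_left h hd

lemma rpow_le_taylor {q d t : ℝ} (hq : 2 ≤ q) (hd : 0 < d) (ht : 0 ≤ t) :
    d ^ q ≤ (d + t) ^ q - q * t * (d + t) ^ (q - 1) + q * (q - 1) * t ^ 2 * (d + t) ^ (q - 2) := by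
  set p : ℝ → ℝ := fun s ↦
    (d + s) ^ q - q * s * (d + s) ^ (q - 1) + q * (q - 1) * s ^ 2 * (d + s) ^ (q - 2)
  have hp : ∀ s, 0 < d + s → HasDerivAt p
      (q * (q - 1) * s * (d + s) ^ (q - 2) + q * (q - 1) * (q - 2) * s ^ 2 * (d + s) ^ (q - 3))
      s := by
    intro s hs
    have hb : HasDerivAt (fun s ↦ d + s) 1 s := (hasDerivAt_id s).const_add d
    refine (((hb.rpow_const (p := q) (Or.inl hs.ne')).sub
      (((hasDerivAt_id s).const_mul q).mul (hb.rpow_const (p := q - 1) (Or.inl hs.ne')))).add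
      (((hasDerivAt_pow 2 s).const_mul (q * (q - 1))).mul
        (hb.rpow_const (p := q - 2) (Or.inl hs.ne')))).congr_deriv ?_
    rw [show q - 2 - 1 = q - 3 by ring, show q - 1 - 1 = q - 2 by ring]
    simp only [id]
    ring
  have hmono : MonotoneOn p (Ici 0) := by
    refine monotoneOn_of_hasDerivWithinAt_nonneg (convex_Ici 0)
      (fun s hs ↦ (hp s (by linarith [mem_Ici.1 hs])).continuousAt.continuousWithinAt)
      (fun s hs ↦ (hp s ?_).hasDerivWithinAt) fun s hs ↦ ?_
    all_goals rw [interior_Ici, mem_Ioi] at hs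
    · linarith
    have h1 : 0 ≤ q * (q - 1) := by nlinarith
    have h2 : 0 ≤ q * (q - 1) * (q - 2) := mul_nonneg h1 (by linarith)
    have hds : 0 < d + s := by linarith
    positivity
  have h0 : p 0 = d ^ q := by simp [p]
  simpa [h0] using hmono self_mem_Ici ht ht

lemma sq_add_lt_mul_add {q d t B : ℝ} (hq : 2 ≤ q) (hd : 0 < d) (ht : 0 < t) (hB : 0 ≤ B) :
    (q * t * (d + t) ^ (q - 1) + B) ^ 2 <
      (q * t * (d + t) ^ (q - 1) + q * (q - 1) * t ^ 2 * (d + t) ^ (q - 2) + B) *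
        ((d + t) ^ q - d ^ q + B) := by
  have hbern := rpow_mul_add_mul_lt_mul_add_rpow (q := q) (by linarith) hd ht
  have htaylor := rpow_le_taylor hq hd ht.le
  have hdt : 0 < d + t := by linarith
  set P := (d + t) ^ (q - 2)
  have hP : 0 < P := by positivity
  have h1 : (d + t) ^ (q - 1) = P * (d + t) := by
    rw [← rpow_add_one hdt.ne']; ring_nf
  have h2 : (d + t) ^ q = P * (d + t) ^ 2 := by
    rw [← rpow_natCast, ← rpow_add hdt]; ring_nf
  rw [h2] at hbern
  rw [h1, h2] at htaylor ⊢
  have hqtP : 0 < q * t * P := mul_pos (mul_pos (by linarith) ht) hP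
  nlinarith [mul_lt_mul_of_pos_left hbern hqtP, mul_le_mul_of_nonneg_left htaylor hB]

/-- With `d = 1 - ρ` and `exp u = 1 + x` this is `(1 + x) * Nq q ρ x (1 / x)`. -/
noncomputable def expMoment (q d ρ u : ℝ) : ℝ :=
  (d + ρ * exp u) ^ q + d ^ q * (exp u - 1)

section
variable {q d ρ : ℝ}

lemma expMoment_pos (hq : 0 < q) (hd : 0 < d) (hρ : 0 ≤ ρ) (u : ℝ) : 0 < expMoment q d ρ u := by
  have h : d ^ q ≤ (d + ρ * exp u) ^ q :=
    rpow_le_rpow hd.le (le_add_of_nonneg_right (by positivity)) hq.le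
  unfold expMoment
  nlinarith [exp_pos u, rpow_pos_of_pos hd q]

lemma hasDerivAt_expMoment (hq : 1 ≤ q) (u : ℝ) :
    HasDerivAt (expMoment q d ρ)
      (q * (ρ * exp u) * (d + ρ * exp u) ^ (q - 1) + d ^ q * exp u) u := by
  have hb : HasDerivAt (fun u ↦ d + ρ * exp u) (ρ * exp u) u :=
    ((hasDerivAt_exp u).const_mul ρ).const_add d
  refine ((hb.rpow_const (Or.inr hq)).add
    (((hasDerivAt_exp u).sub_const 1).const_mul _)).congr_deriv ?_
  ring

lemma hasDerivAt_deriv_expMoment (hq : 2 ≤ q) (u : ℝ) :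
    HasDerivAt (fun u ↦ q * (ρ * exp u) * (d + ρ * exp u) ^ (q - 1) + d ^ q * exp u)
      (q * (ρ * exp u) * (d + ρ * exp u) ^ (q - 1) +
        q * (q - 1) * (ρ * exp u) ^ 2 * (d + ρ * exp u) ^ (q - 2) + d ^ q * exp u) u := by
  have hρe : HasDerivAt (fun u ↦ ρ * exp u) (ρ * exp u) u := (hasDerivAt_exp u).const_mul ρ
  refine (((hρe.const_mul q).mul ((hρe.const_add d).rpow_const (p := q - 1)
    (Or.inr (by linarith)))).add ((hasDerivAt_exp u).const_mul _)).congr_deriv ?_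
  rw [show q - 1 - 1 = q - 2 by ring]
  ring

lemma strictConvexOn_log_expMoment (hq : 2 ≤ q) (hd : 0 < d) (hρ : 0 < ρ) :
    StrictConvexOn ℝ univ fun u ↦ log (expMoment q d ρ u) := by
  refine strictConvexOn_univ_log_of_hasDerivAt (hasDerivAt_expMoment (by linarith))
    (hasDerivAt_deriv_expMoment hq) (expMoment_pos (by linarith) hd hρ.le) fun u ↦ ?_
  have h := sq_add_lt_mul_add (B := d ^ q * exp u) hq hd (mul_pos hρ (exp_pos u)) (by positivity)
  convert h using 2
  unfold expMoment
  ring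

end

lemma log_expMoment_div_lt {q ρ u₁ u₂ : ℝ} (hq : 2 ≤ q) (hρ0 : 0 < ρ) (hρ1 : ρ < 1)
    (hu₁ : 0 < u₁) (hu : u₁ < u₂) :
    log (expMoment q (1 - ρ) ρ u₁) / u₁ < log (expMoment q (1 - ρ) ρ u₂) / u₂ := by
  have h0 : log (expMoment q (1 - ρ) ρ 0) = 0 := by simp [expMoment]
  simpa [h0] using (strictConvexOn_log_expMoment hq (sub_pos.2 hρ1) hρ0).secant_strict_mono
    (mem_univ 0) (mem_univ u₁) (mem_univ u₂) hu₁.ne' (hu₁.trans hu).ne' hu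

lemma Rq_one_div_eq {q ρ x : ℝ} (hq : 0 < q) (hρ0 : 0 ≤ ρ) (hρ1 : ρ < 1) (hx : 0 < x) :
    Rq q ρ x (1 / x) =
      (log (expMoment q (1 - ρ) ρ (log (1 + x))) / log (1 + x) - 1) / (q - 1) := by
  have hx1 : 0 < 1 + x := by linarith
  have hu : log (1 + x) ≠ 0 := (log_pos (by linarith)).ne'
  have hNρ : Nq q ρ x (1 / x) = expMoment q (1 - ρ) ρ (log (1 + x)) / (1 + x) := by
    rw [Nq, expMoment, exp_log hx1]
    field_simp
    ring_nf
  have hN1 : Nq q 1 x (1 / x) = (1 + x) ^ (q - 1) := by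
    rw [Nq, rpow_sub hx1, rpow_one]
    field_simp
    simp [zero_rpow hq.ne']
  rw [Rq, hNρ, hN1, log_div (expMoment_pos hq (sub_pos.2 hρ1) hρ0 _).ne' hx1.ne', log_rpow hx1]
  field_simp

theorem stmt13 (q ρ : ℝ) (hq : 2 ≤ q) (hρ0 : 0 < ρ) (hρ1 : ρ < 1) :
    ∀ x₁ x₂ : ℝ, 0 < x₁ → x₁ < x₂ →
      Rq q ρ x₁ (1 / x₁) < Rq q ρ x₂ (1 / x₂) := by
  intro x₁ x₂ hx₁ hx
  rw [Rq_one_div_eq (by linarith) hρ0.le hρ1 hx₁,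
    Rq_one_div_eq (by linarith) hρ0.le hρ1 (hx₁.trans hx)]
  have hq1 : 0 < q - 1 := by linarith
  gcongr (?_ - 1) / _
  exact log_expMoment_div_lt hq hρ0 hρ1 (log_pos (by linarith))
    (log_lt_log (by linarith) (by linarith))
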